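/- Let γ : [0, L] → ℝ² be a C³ arc-length parametrized curve with γ(0) = 0, tangent τ₀ = γ'(0), curvature vector γ''(0) = κ₀ n₀. Let y₊ = γ(t₊) and y₋ = γ(t₋) with 0 < t₊ ≤ h, -h ≤ t₋ < 0. Define κ₀ʰ = 2(1/|y₊| + 1/|y₋|) · (y₋ · Q y₊)/(|y₊| + |y₋|)², where Q = [[0,1],[-1,0]]. Then |κ₀ʰ - κ₀| ≤ C h, where C depends only on bounds on |γ''| and |γ'''| and a lower bound c|t-s| ≤ |γ(t)-γ(s)| on the chord-arc constant. -/

import Mathlib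

/-!
Up to `O(|t|³)`, the points `γ t` lie on the osculating parabola `t τ + (t²/2) γ''(0)`, and for
two points of that parabola the cross product is exact:
`y₋ · Q y₊ = t₋ t₊ (t₋ - t₊) / 2 · κ₀`. Since `|τ| = 1`, the chord lengths `|y±|` equal `|t±|`
up to a relative error `O(h)`, so numerator and denominator of `κ₀ʰ` are, up to a relative
error `O(h)`, `κ₀ P` and `P` with `P = t₊ |t₋| (t₊ + |t₋|)`.
-/

open Real Set

noncomputable def nrm (z : ℝ × ℝ) : ℝ := Real.sqrt (z.1 ^ 2 + z.2 ^ 2)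

def dot (a b : ℝ × ℝ) : ℝ := a.1 * b.1 + a.2 * b.2

/-- Rotation by 90 degrees: `Q = [[0,1],[-1,0]]` applied to a vector. -/
def Qrot (v : ℝ × ℝ) : ℝ × ℝ := (v.2, -v.1)

/-- The discrete curvature `κ₀ʰ` built from the two points `y₊, y₋`. -/
noncomputable def kappah (yp ym : ℝ × ℝ) : ℝ :=
  2 * (1 / nrm yp + 1 / nrm ym) * dot ym (Qrot yp) / (nrm yp + nrm ym) ^ 2

lemma nrm_eq_norm_toLp (z : ℝ × ℝ) : nrm z = ‖WithLp.toLp 2 z‖ := by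
  simp [nrm, WithLp.prod_norm_eq_of_L2]

lemma nrm_nonneg (z : ℝ × ℝ) : 0 ≤ nrm z := Real.sqrt_nonneg _

lemma nrm_smul (t : ℝ) (z : ℝ × ℝ) : nrm (t • z) = |t| * nrm z := by
  simp only [nrm_eq_norm_toLp, WithLp.toLp_smul, norm_smul, Real.norm_eq_abs]

lemma abs_nrm_sub_nrm_le (a b : ℝ × ℝ) : |nrm a - nrm b| ≤ nrm (a - b) := by
  simpa only [nrm_eq_norm_toLp, WithLp.toLp_sub] using abs_norm_sub_norm_le _ _

lemma norm_le_nrm (z : ℝ × ℝ) : ‖z‖ ≤ nrm z :=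
  max_le (Real.abs_le_sqrt (by nlinarith)) (Real.abs_le_sqrt (by nlinarith))

lemma nrm_le_two_mul_norm (z : ℝ × ℝ) : nrm z ≤ 2 * ‖z‖ := by
  have h₁ : |z.1| ≤ ‖z‖ := norm_fst_le z
  have h₂ : |z.2| ≤ ‖z‖ := norm_snd_le z
  refine Real.sqrt_le_iff.mpr ⟨by positivity, ?_⟩
  nlinarith [sq_abs z.1, sq_abs z.2, abs_nonneg z.1, abs_nonneg z.2]

lemma abs_dot_Qrot_le (a b : ℝ × ℝ) : |dot a (Qrot b)| ≤ nrm a * nrm b := by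
  rw [nrm, nrm, ← Real.sqrt_mul (by positivity)]
  exact Real.abs_le_sqrt (by simp only [dot, Qrot]; nlinarith [sq_nonneg (a.1 * b.1 + a.2 * b.2)])

lemma abs_dot_Qrot_sub_dot_Qrot_le (a a' b b' : ℝ × ℝ) :
    |dot a' (Qrot b') - dot a (Qrot b)| ≤ nrm (a' - a) * nrm b' + nrm a * nrm (b' - b) := by
  have hsplit : dot a' (Qrot b') - dot a (Qrot b)
      = dot (a' - a) (Qrot b') + dot a (Qrot (b' - b)) := by
    simp only [dot, Qrot, Prod.fst_sub, Prod.snd_sub]; ring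
  rw [hsplit]
  exact (abs_add_le _ _).trans (add_le_add (abs_dot_Qrot_le _ _) (abs_dot_Qrot_le _ _))

section Taylor

variable {E : Type*} [NormedAddCommGroup E] [NormedSpace ℝ E]

lemma norm_sub_le_mul_abs_pow_of_norm_deriv_le {g : ℝ → E} (hg : Differentiable ℝ g) {C : ℝ}
    {n : ℕ} {a : ℝ} (hC : ∀ y, ‖deriv g y‖ ≤ C * |y - a| ^ n) (x : ℝ) :
    ‖g x - g a‖ ≤ C * |x - a| ^ (n + 1) := by
  have hC₀ : 0 ≤ C := by simpa using (norm_nonneg _).trans (hC (a + 1))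
  have hbound : ∀ y ∈ uIcc a x, ‖deriv g y‖ ≤ C * |x - a| ^ n := fun y hy =>
    (hC y).trans <| mul_le_mul_of_nonneg_left
      (pow_le_pow_left₀ (abs_nonneg _) (abs_sub_left_of_mem_uIcc hy) n) hC₀
  calc ‖g x - g a‖ ≤ C * |x - a| ^ n * ‖x - a‖ :=
        Convex.norm_image_sub_le_of_norm_deriv_le (fun y _ => hg y) hbound (convex_uIcc a x)
          left_mem_uIcc right_mem_uIcc
    _ = C * |x - a| ^ (n + 1) := by rw [Real.norm_eq_abs, pow_succ, mul_assoc]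

lemma norm_sub_taylor_two_le {f : ℝ → E} (hf : ContDiff ℝ 3 f) {M : ℝ}
    (hM : ∀ s, ‖iteratedDeriv 3 f s‖ ≤ M) (a x : ℝ) :
    ‖f x - f a - (x - a) • deriv f a - ((x - a) ^ 2 / 2) • iteratedDeriv 2 f a‖
      ≤ M * |x - a| ^ 3 := by
  set v := iteratedDeriv 2 f a
  have hd₀ : Differentiable ℝ f := hf.differentiable (by norm_num)
  have hd₁ : Differentiable ℝ (deriv f) := by
    simpa only [iteratedDeriv_one] using hf.differentiable_iteratedDeriv 1 (by norm_num)
  have hd₂ : Differentiable ℝ (iteratedDeriv 2 f) := hf.differentiable_iteratedDeriv 2 (by norm_num)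
  have hdd : deriv (deriv f) = iteratedDeriv 2 f := by rw [iteratedDeriv_succ, iteratedDeriv_one]
  have hlin : ∀ (u : ℝ) (c : E), HasDerivAt (fun u => (u - a) • c) c u := fun u c => by
    simpa using ((hasDerivAt_id u).sub_const a).smul_const c
  have hquad : ∀ u, HasDerivAt (fun u => ((u - a) ^ 2 / 2) • v) ((u - a) • v) u := fun u => by
    simpa using ((((hasDerivAt_id u).sub_const a).pow 2).div_const 2).smul_const v
  have step₂ : ∀ y, ‖iteratedDeriv 2 f y - v‖ ≤ M * |y - a| ^ 1 :=
    norm_sub_le_mul_abs_pow_of_norm_deriv_le hd₂ (n := 0)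
      (by simpa [← iteratedDeriv_succ] using hM)
  have step₁ : ∀ y, ‖deriv f y - deriv f a - (y - a) • v‖ ≤ M * |y - a| ^ 2 := fun y => by
    have hder : ∀ u, HasDerivAt (fun u => deriv f u - (u - a) • v) (iteratedDeriv 2 f u - v) u :=
      fun u => hdd ▸ (hd₁ u).hasDerivAt.fun_sub (hlin u v)
    have key := norm_sub_le_mul_abs_pow_of_norm_deriv_le (fun u => (hder u).differentiableAt)
      (fun u => (hder u).deriv ▸ step₂ u) y
    rw [sub_self, zero_smul, sub_zero] at key
    convert key using 2
    abel
  have hder : ∀ u, HasDerivAt (fun u => f u - (u - a) • deriv f a - ((u - a) ^ 2 / 2) • v)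
      (deriv f u - deriv f a - (u - a) • v) u :=
    fun u => ((hd₀ u).hasDerivAt.sub (hlin u _)).sub (hquad u)
  have key := norm_sub_le_mul_abs_pow_of_norm_deriv_le (fun u => (hder u).differentiableAt)
    (fun u => (hder u).deriv ▸ step₁ u) x
  rw [sub_self, zero_smul, sub_zero, zero_pow two_ne_zero, zero_div, zero_smul, sub_zero] at key
  convert key using 2
  abel

end Taylor

lemma abs_mul_mul_add_sub_le {a b p q δ : ℝ} (hp : 0 < p) (hq : 0 < q) (hδ : 0 ≤ δ)
    (hδ₁ : δ ≤ 1) (ha : |a - p| ≤ δ * p) (hb : |b - q| ≤ δ * q) :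
    |a * b * (a + b) - p * q * (p + q)| ≤ 7 * δ * (p * q * (p + q)) := by
  obtain ⟨ha₁, ha₂⟩ := abs_le.mp ha
  obtain ⟨hb₁, hb₂⟩ := abs_le.mp hb
  have hδ' : 0 ≤ 1 - δ := by linarith
  have ha₀ : 0 ≤ a := by nlinarith
  have hb₀ : 0 ≤ b := by nlinarith
  have hlow : (1 - δ) ^ 3 * (p * q * (p + q)) ≤ a * b * (a + b) := by
    calc (1 - δ) ^ 3 * (p * q * (p + q))
        = ((1 - δ) * p) * ((1 - δ) * q) * ((1 - δ) * p + (1 - δ) * q) := by ring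
      _ ≤ a * b * (a + b) := by gcongr <;> linarith
  have hup : a * b * (a + b) ≤ (1 + δ) ^ 3 * (p * q * (p + q)) := by
    calc a * b * (a + b) ≤ ((1 + δ) * p) * ((1 + δ) * q) * ((1 + δ) * p + (1 + δ) * q) := by
          gcongr <;> linarith
      _ = (1 + δ) ^ 3 * (p * q * (p + q)) := by ring
  have hP : 0 < p * q * (p + q) := by positivity
  rw [abs_le]
  constructor <;> nlinarith [mul_nonneg (mul_nonneg hδ hδ) hP.le, mul_nonneg hδ hP.le,
    mul_nonneg (mul_nonneg (mul_nonneg hδ hδ) hδ) hP.le]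

lemma abs_div_sub_le {X D P κ η E : ℝ} (hP : 0 < P) (hη : η ≤ 1 / 2) (hD : |D - P| ≤ η * P)
    (hX : |X - κ * P| ≤ E * P) : |X / D - κ| ≤ 2 * (|κ| * η + E) := by
  have hD₀ : P / 2 ≤ D := by linarith [(abs_le.mp hD).1, mul_le_mul_of_nonneg_right hη hP.le]
  have hDpos : 0 < D := by linarith
  have hsplit : X / D - κ = ((X - κ * P) + κ * (P - D)) / D := by field_simp; ring
  rw [hsplit, abs_div, abs_of_pos hDpos, div_le_iff₀ hDpos]
  calc |X - κ * P + κ * (P - D)| ≤ E * P + |κ| * (η * P) := by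
        refine (abs_add_le _ _).trans (add_le_add hX ?_)
        rw [abs_mul, abs_sub_comm]
        exact mul_le_mul_of_nonneg_left hD (abs_nonneg κ)
    _ = 2 * (|κ| * η + E) * (P / 2) := by ring
    _ ≤ 2 * (|κ| * η + E) * D := by
        have : 0 ≤ E := nonneg_of_mul_nonneg_left ((abs_nonneg _).trans hX) hP
        have : 0 ≤ η := nonneg_of_mul_nonneg_left ((abs_nonneg _).trans hD) hP
        gcongr

lemma kappah_eq_two_mul_div {yp ym : ℝ × ℝ} (hp : 0 < nrm yp) (hm : 0 < nrm ym) :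
    kappah yp ym = 2 * dot ym (Qrot yp) / (nrm yp * nrm ym * (nrm yp + nrm ym)) := by
  rw [kappah]
  field_simp
  ring

noncomputable def parabola (τ w : ℝ × ℝ) (t : ℝ) : ℝ × ℝ := t • τ + (t ^ 2 / 2) • w

lemma dot_parabola_Qrot_parabola (τ w : ℝ × ℝ) (s t : ℝ) :
    dot (parabola τ w s) (Qrot (parabola τ w t)) = s * t * (s - t) / 2 * dot w (Qrot τ) := by
  simp only [parabola, dot, Qrot, Prod.fst_add, Prod.snd_add, Prod.smul_fst, Prod.smul_snd,
    smul_eq_mul]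
  ring

lemma abs_nrm_parabola_sub_abs_le {τ : ℝ × ℝ} (hτ : nrm τ = 1) (w : ℝ × ℝ) (t : ℝ) :
    |nrm (parabola τ w t) - (|t|)| ≤ t ^ 2 / 2 * nrm w := by
  have hlin : nrm (t • τ) = |t| := by rw [nrm_smul, hτ, mul_one]
  have hquad : parabola τ w t - t • τ = (t ^ 2 / 2) • w := by rw [parabola, add_sub_cancel_left]
  simpa [hlin, hquad, nrm_smul, abs_of_nonneg (by positivity : (0 : ℝ) ≤ t ^ 2 / 2)] using
    abs_nrm_sub_nrm_le (parabola τ w t) (t • τ)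

lemma abs_nrm_sub_abs_le_of_near_parabola {τ w y : ℝ × ℝ} {M₂ ε h t : ℝ} (hτ : nrm τ = 1)
    (hw : nrm w ≤ M₂)
    (hε : 0 ≤ ε) (hy : nrm (y - parabola τ w t) ≤ ε * |t| ^ 3) (ht : |t| ≤ h) (h₁ : h ≤ 1) :
    |nrm y - (|t|)| ≤ (M₂ / 2 + ε) * h * |t| := by
  have hM₂ : 0 ≤ M₂ := (nrm_nonneg w).trans hw
  have ht₂ : t ^ 2 ≤ h * |t| := by
    rw [← sq_abs, sq]; exact mul_le_mul_of_nonneg_right ht (abs_nonneg t)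
  have ht₃ : |t| ^ 3 ≤ h * |t| := by
    have : |t| ^ 2 ≤ h := by nlinarith [abs_nonneg t]
    calc |t| ^ 3 = |t| ^ 2 * |t| := by ring
      _ ≤ h * |t| := by gcongr
  calc |nrm y - (|t|)| ≤ |nrm y - nrm (parabola τ w t)| + |nrm (parabola τ w t) - (|t|)| :=
        abs_sub_le _ _ _
    _ ≤ ε * |t| ^ 3 + t ^ 2 / 2 * M₂ :=
        add_le_add ((abs_nrm_sub_nrm_le _ _).trans hy)
          ((abs_nrm_parabola_sub_abs_le hτ w t).trans (by gcongr))
    _ ≤ (M₂ / 2 + ε) * h * |t| := by nlinarith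

lemma abs_two_mul_dot_Qrot_sub_le {τ w yp ym : ℝ × ℝ} {ε h tp tm : ℝ} (hε : 0 ≤ ε)
    (hp : nrm (yp - parabola τ w tp) ≤ ε * |tp| ^ 3)
    (hm : nrm (ym - parabola τ w tm) ≤ ε * |tm| ^ 3)
    (hyp : nrm yp ≤ 2 * |tp|) (hpm : nrm (parabola τ w tm) ≤ 2 * |tm|)
    (htp : |tp| ≤ h) (htm : |tm| ≤ h) :
    |2 * dot ym (Qrot yp) - tm * tp * (tm - tp) * dot w (Qrot τ)|
      ≤ 4 * ε * h * (|tp| * |tm| * (|tp| + |tm|)) := by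
  have hsplit := abs_dot_Qrot_sub_dot_Qrot_le (parabola τ w tm) ym (parabola τ w tp) yp
  rw [dot_parabola_Qrot_parabola] at hsplit
  have hrem : nrm (ym - parabola τ w tm) * nrm yp
      + nrm (parabola τ w tm) * nrm (yp - parabola τ w tp)
      ≤ ε * |tm| ^ 3 * (2 * |tp|) + 2 * |tm| * (ε * |tp| ^ 3) := by
    gcongr <;> exact nrm_nonneg _
  have hsq : |tp| ^ 2 + |tm| ^ 2 ≤ h * (|tp| + |tm|) := by
    nlinarith [abs_nonneg tp, abs_nonneg tm]
  rw [show 2 * dot ym (Qrot yp) - tm * tp * (tm - tp) * dot w (Qrot τ)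
      = 2 * (dot ym (Qrot yp) - tm * tp * (tm - tp) / 2 * dot w (Qrot τ)) by ring, abs_mul,
    abs_two]
  calc 2 * |dot ym (Qrot yp) - tm * tp * (tm - tp) / 2 * dot w (Qrot τ)|
      ≤ 2 * (ε * |tm| ^ 3 * (2 * |tp|) + 2 * |tm| * (ε * |tp| ^ 3)) := by linarith
    _ = 4 * ε * (|tp| * |tm|) * (|tp| ^ 2 + |tm| ^ 2) := by ring
    _ ≤ 4 * ε * (|tp| * |tm|) * (h * (|tp| + |tm|)) := by gcongr
    _ = 4 * ε * h * (|tp| * |tm| * (|tp| + |tm|)) := by ring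

lemma abs_kappah_sub_le_of_near_parabola {τ w yp ym : ℝ × ℝ} {M₂ ε h tp tm : ℝ}
    (hτ : nrm τ = 1) (hw : nrm w ≤ M₂) (hε : 0 ≤ ε)
    (hp : nrm (yp - parabola τ w tp) ≤ ε * |tp| ^ 3)
    (hm : nrm (ym - parabola τ w tm) ≤ ε * |tm| ^ 3)
    (htp : 0 < tp) (htph : tp ≤ h) (htm : tm < 0) (htmh : -h ≤ tm) (h₁ : h ≤ 1)
    (hsmall : 14 * ((M₂ / 2 + ε) * h) ≤ 1) :
    |kappah yp ym - dot w (Qrot τ)| ≤ (14 * M₂ * (M₂ / 2 + ε) + 8 * ε) * h := by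
  have hM₂ : 0 ≤ M₂ := (nrm_nonneg w).trans hw
  have hδ₀ : 0 ≤ (M₂ / 2 + ε) * h := mul_nonneg (by positivity) (by linarith)
  have htp' : |tp| ≤ h := by rwa [abs_of_pos htp]
  have htm' : |tm| ≤ h := by rw [abs_of_neg htm]; linarith
  have hlen_p := abs_nrm_sub_abs_le_of_near_parabola hτ hw hε hp htp' h₁
  have hlen_m := abs_nrm_sub_abs_le_of_near_parabola hτ hw hε hm htm' h₁
  have hlen_par := abs_nrm_sub_abs_le_of_near_parabola hτ hw hε (y := parabola τ w tm)
    (by rw [sub_self, show nrm 0 = 0 by simp [nrm]]; positivity) htm' h₁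
  have hpos_p : 0 < nrm yp := by nlinarith [(abs_le.mp hlen_p).1, abs_pos.mpr htp.ne']
  have hpos_m : 0 < nrm ym := by nlinarith [(abs_le.mp hlen_m).1, abs_pos.mpr htm.ne]
  have hnum := abs_two_mul_dot_Qrot_sub_le hε hp hm
    (by nlinarith [(abs_le.mp hlen_p).2, abs_nonneg tp])
    (by nlinarith [(abs_le.mp hlen_par).2, abs_nonneg tm]) htp' htm'
  rw [show tm * tp * (tm - tp) * dot w (Qrot τ) = dot w (Qrot τ) * (|tp| * |tm| * (|tp| + |tm|)) by
    rw [abs_of_pos htp, abs_of_neg htm]; ring] at hnum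
  have hden := abs_mul_mul_add_sub_le (abs_pos.mpr htp.ne') (abs_pos.mpr htm.ne) hδ₀
    (by linarith) hlen_p hlen_m
  have hκ : |dot w (Qrot τ)| ≤ M₂ := (abs_dot_Qrot_le w τ).trans (by rw [hτ, mul_one]; exact hw)
  rw [kappah_eq_two_mul_div hpos_p hpos_m]
  have hP : 0 < |tp| * |tm| * (|tp| + |tm|) := by
    have := abs_pos.mpr htp.ne'
    have := abs_pos.mpr htm.ne
    positivity
  calc _ ≤ 2 * (|dot w (Qrot τ)| * (7 * ((M₂ / 2 + ε) * h)) + 4 * ε * h) :=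
        abs_div_sub_le hP (by linarith) hden hnum
    _ ≤ 2 * (M₂ * (7 * ((M₂ / 2 + ε) * h)) + 4 * ε * h) := by gcongr
    _ = (14 * M₂ * (M₂ / 2 + ε) + 8 * ε) * h := by ring

lemma nrm_sub_parabola_le {γ : ℝ → ℝ × ℝ} (hγ : ContDiff ℝ 3 γ) (hγ₀ : γ 0 = 0) {M₃ : ℝ}
    (hM₃ : ∀ s, nrm (iteratedDeriv 3 γ s) ≤ M₃) (t : ℝ) :
    nrm (γ t - parabola (deriv γ 0) (iteratedDeriv 2 γ 0) t) ≤ 2 * M₃ * |t| ^ 3 := by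
  -- Taylor's estimate is for the sup norm of `ℝ × ℝ`, hence the factor `2`.
  have htaylor := norm_sub_taylor_two_le hγ (fun s => (norm_le_nrm _).trans (hM₃ s)) 0 t
  simp only [hγ₀, sub_zero] at htaylor
  rw [parabola, ← sub_sub]
  calc _ ≤ 2 * ‖γ t - t • deriv γ 0 - (t ^ 2 / 2) • iteratedDeriv 2 γ 0‖ := nrm_le_two_mul_norm _
    _ ≤ 2 * M₃ * |t| ^ 3 := by rw [mul_assoc]; exact mul_le_mul_of_nonneg_left htaylor two_pos.le

theorem discrete_curvature_error_general (M₂ M₃ c L₀ : ℝ)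
    (hM₂ : 0 < M₂) (hM₃ : 0 < M₃) :
    ∃ C > 0, ∃ h₀ > 0, ∀ γ : ℝ → ℝ × ℝ,
      ContDiff ℝ 3 γ → γ 0 = 0 →
      (∀ s, nrm (deriv γ s) = 1) →
      (∀ s, nrm (iteratedDeriv 2 γ s) ≤ M₂) →
      (∀ s, nrm (iteratedDeriv 3 γ s) ≤ M₃) →
      (∀ s t : ℝ, |t - s| ≤ L₀ → c * |t - s| ≤ nrm (γ t - γ s)) →
      ∀ h tp tm : ℝ, 0 < h → h < h₀ → 0 < tp → tp ≤ h → -h ≤ tm → tm < 0 →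
        |kappah (γ tp) (γ tm) - dot (iteratedDeriv 2 γ 0) (Qrot (deriv γ 0))| ≤ C * h := by
  refine ⟨14 * M₂ * (M₂ / 2 + 2 * M₃) + 8 * (2 * M₃), by positivity,
    min 1 (1 / (14 * (M₂ / 2 + 2 * M₃))), by positivity, ?_⟩
  intro γ hγ hγ₀ hunit hM₂γ hM₃γ _ h tp tm _ hh₀ htp htph htmh htm
  have h₁ : h ≤ 1 := hh₀.le.trans (min_le_left _ _)
  have hsmall : 14 * ((M₂ / 2 + 2 * M₃) * h) ≤ 1 := by
    have := hh₀.le.trans (min_le_right _ _)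
    rw [le_div_iff₀ (by positivity)] at this
    linarith
  exact abs_kappah_sub_le_of_near_parabola (hunit 0) (hM₂γ 0) (by positivity)
    (nrm_sub_parabola_le hγ hγ₀ hM₃γ tp) (nrm_sub_parabola_le hγ hγ₀ hM₃γ tm)
    htp htph htm htmh h₁ hsmall

theorem discrete_curvature_error (M₂ M₃ c L₀ : ℝ)
    (hM₂ : 0 < M₂) (hM₃ : 0 < M₃) (hc : 0 < c) (hL₀ : 0 < L₀) :
    ∃ C > 0, ∃ h₀ > 0, ∀ γ : ℝ → ℝ × ℝ,
      ContDiff ℝ 3 γ → γ 0 = 0 →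
      (∀ s, nrm (deriv γ s) = 1) →
      (∀ s, nrm (iteratedDeriv 2 γ s) ≤ M₂) →
      (∀ s, nrm (iteratedDeriv 3 γ s) ≤ M₃) →
      (∀ s t : ℝ, |t - s| ≤ L₀ → c * |t - s| ≤ nrm (γ t - γ s)) →
      ∀ h tp tm : ℝ, 0 < h → h < h₀ → 0 < tp → tp ≤ h → -h ≤ tm → tm < 0 →
        |kappah (γ tp) (γ tm) - dot (iteratedDeriv 2 γ 0) (Qrot (deriv γ 0))| ≤ C * h :=
  discrete_curvature_error_general M₂ M₃ c L₀ hM₂ hM₃
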